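/- arXiv:1106.2481 — 4 statements merged into one kernel-verified Lean document; each statement's English description precedes it below -/
import Mathlib

section
/- Let Σ be a finite alphabet, n a positive integer, and for each σ ∈ Σ let A σ be an n × n complex matrix. Define η : Σ* → Matrix n n ℂ by η(ε) = M₀ for some fixed matrix M₀, and require that η satisfies η(σ·w) = (A σ)ᴴ · η(w) · (A σ) for all σ ∈ Σ and w ∈ Σ*. Let V i = span ℂ {η(w) : |w| ≤ i}. Then there exists l < n² such that V l = V (l+j) for all j ≥ 1. -/
open Matrix

theorem stmt4 {σ : Type*} [Fintype σ] (n : ℕ) (hn : 0 < n)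
    (A : σ → Matrix (Fin n) (Fin n) ℂ) (M₀ : Matrix (Fin n) (Fin n) ℂ)
    (η : List σ → Matrix (Fin n) (Fin n) ℂ)
    (hε : η [] = M₀)
    (hrec : ∀ (a : σ) (w : List σ), η (a :: w) = (A a)ᴴ * η w * A a) :
    ∃ l < n ^ 2, ∀ j ≥ 1,
      Submodule.span ℂ {M | ∃ w : List σ, w.length ≤ l ∧ η w = M} =
        Submodule.span ℂ {M | ∃ w : List σ, w.length ≤ l + j ∧ η w = M} := by
  set V : ℕ → Submodule ℂ (Matrix (Fin n) (Fin n) ℂ) :=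
    fun i => Submodule.span ℂ {M | ∃ w : List σ, w.length ≤ i ∧ η w = M} with hV
  -- monotonicity
  have hmono : ∀ i j : ℕ, i ≤ j → V i ≤ V j := by
    intro i j hij
    apply Submodule.span_mono
    rintro M ⟨w, hw, rfl⟩
    exact ⟨w, hw.trans hij, rfl⟩
  -- stabilization step
  have hstep : ∀ m : ℕ, V m = V (m + 1) → V (m + 1) = V (m + 2) := by
    intro m hm
    refine le_antisymm (hmono _ _ (by omega)) ?_
    apply Submodule.span_le.mpr
    rintro M ⟨w, hw, rfl⟩
    match w with
    | [] =>
      exact Submodule.subset_span ⟨[], by simp, rfl⟩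
    | a :: w' =>
      have hw' : w'.length ≤ m + 1 := by simpa using hw
      have hmem : η w' ∈ V m := by
        rw [hm]
        exact Submodule.subset_span ⟨w', hw', rfl⟩
      set T : Matrix (Fin n) (Fin n) ℂ →ₗ[ℂ] Matrix (Fin n) (Fin n) ℂ :=
        (LinearMap.mulLeft ℂ (A a)ᴴ).comp (LinearMap.mulRight ℂ (A a)) with hT
      have hTval : ∀ M, T M = (A a)ᴴ * M * A a := by
        intro M
        simp [hT, LinearMap.mulLeft_apply, LinearMap.mulRight_apply, mul_assoc]
      have hmap : Submodule.map T (V m) ≤ V (m + 1) := by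
        rw [hV]
        simp only [Submodule.map_span]
        apply Submodule.span_mono
        rintro M ⟨N, ⟨w'', hw'', rfl⟩, rfl⟩
        exact ⟨a :: w'', by simpa using hw''.trans (by omega), by rw [hrec, hTval]⟩
      have : T (η w') ∈ V (m + 1) := hmap ⟨η w', hmem, rfl⟩
      rw [hTval] at this
      rw [hrec]
      exact this
  -- existence of l < n^2 with V l = V (l+1)
  have hfr : Module.finrank ℂ (Matrix (Fin n) (Fin n) ℂ) = n ^ 2 := by
    rw [Module.finrank_matrix]
    simp [sq, Fintype.card_fin]
  have hex : ∃ l < n ^ 2, V l = V (l + 1) := by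
    by_cases hM : M₀ = 0
    · -- everything is zero
      have hzero : ∀ w : List σ, η w = 0 := by
        intro w
        induction w with
        | nil => rw [hε, hM]
        | cons a w ih => rw [hrec, ih]; simp
      refine ⟨0, by positivity, ?_⟩
      have hset : ∀ i : ℕ, {M | ∃ w : List σ, w.length ≤ i ∧ η w = M} = {(0 : Matrix (Fin n) (Fin n) ℂ)} := by
        intro i
        ext M
        constructor
        · rintro ⟨w, _, rfl⟩; exact hzero w
        · rintro rfl; exact ⟨[], by simp, hzero []⟩
      rw [hV]
      simp only [hset]
    · by_contra hcon
      push_neg at hcon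
      have hlt : ∀ l < n ^ 2, V l < V (l + 1) := fun l hl =>
        lt_of_le_of_ne (hmono _ _ (by omega)) (hcon l hl)
      have hrank : ∀ i ≤ n ^ 2, i + 1 ≤ Module.finrank ℂ (V i) := by
        intro i hi
        induction i with
        | zero =>
          have hM0 : M₀ ∈ V 0 := Submodule.subset_span ⟨[], by simp, hε⟩
          have : V 0 ≠ ⊥ := by
            intro h
            rw [h] at hM0
            exact hM (by simpa using hM0)
          have := Submodule.one_le_finrank_iff.mpr this
          omega
        | succ i ih =>
          have h1 := ih (by omega)
          have h2 : Module.finrank ℂ (V i) < Module.finrank ℂ (V (i + 1)) :=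
            Submodule.finrank_lt_finrank_of_lt (hlt i (by omega))
          omega
      have h1 := hrank (n ^ 2 - 1) (by omega)
      have h2 := Submodule.finrank_le (V (n ^ 2 - 1))
      rw [hfr] at h2
      have heq : Module.finrank ℂ (V (n ^ 2 - 1)) = n ^ 2 := by
        have : 0 < n ^ 2 := by positivity
        omega
      have htop : V (n ^ 2 - 1) = ⊤ := Submodule.eq_top_of_finrank_eq (by rw [heq, hfr])
      have h0 : 0 < n ^ 2 := by positivity
      have hlast : V (n ^ 2 - 1) < V (n ^ 2 - 1 + 1) := hlt _ (by omega)
      rw [htop] at hlast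
      exact (not_top_lt hlast)
  obtain ⟨l, hl, hVl⟩ := hex
  refine ⟨l, hl, ?_⟩
  have hall : ∀ k : ℕ, V (l + k) = V (l + k + 1) := by
    intro k
    induction k with
    | zero => exact hVl
    | succ k ih => exact hstep (l + k) ih
  intro j hj
  have : ∀ j : ℕ, V l = V (l + j) := by
    intro j
    induction j with
    | zero => rfl
    | succ j ih => rw [ih]; exact hall j
  exact this j
end

section
/- Let Σ be a finite alphabet, n₁, n₂ positive integers, set n = n₁ + n₂, and let A : Σ → Matrix n n ℂ be such that each A σ is block-diagonal with blocks of sizes n₁ and n₂. Let η : Σ* → Matrix n n ℂ satisfy η(σ·w) = (A σ)ᴴ η(w) (A σ) and suppose η(ε) is block-diagonal with blocks of sizes n₁ and n₂. Then there exists l < n₁² + n₂² such that span{η(w) : |w| ≤ l} = span{η(w) : |w| ≤ l+j} for all j ≥ 1. -/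
open Matrix

/-- Span of the values of `η` on words of length at most `k`. -/
private noncomputable def Sp {σ : Type*} {n : Type*} (η : List σ → Matrix n n ℂ) (k : ℕ) :
    Submodule ℂ (Matrix n n ℂ) :=
  Submodule.span ℂ {M | ∃ w : List σ, w.length ≤ k ∧ η w = M}

private lemma sp_mono {σ : Type*} {n : Type*} (η : List σ → Matrix n n ℂ)
    {k k' : ℕ} (h : k ≤ k') : Sp η k ≤ Sp η k' :=
  Submodule.span_mono (fun M => by rintro ⟨w, hw, rfl⟩; exact ⟨w, hw.trans h, rfl⟩)

/-- Conjugation `M ↦ Bᴴ * M * B` as a linear map. -/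
private noncomputable def conjMap {n : Type*} [Fintype n] (B : Matrix n n ℂ) :
    Matrix n n ℂ →ₗ[ℂ] Matrix n n ℂ where
  toFun M := Bᴴ * M * B
  map_add' M N := by simp [Matrix.mul_add, Matrix.add_mul]
  map_smul' c M := by simp [Matrix.mul_smul, Matrix.smul_mul]

private lemma sp_step {σ : Type*} {n : Type*} [Fintype n]
    (A : σ → Matrix n n ℂ) (η : List σ → Matrix n n ℂ)
    (hrec : ∀ (a : σ) (w : List σ), η (a :: w) = (A a)ᴴ * η w * A a)
    (k : ℕ) (hk : Sp η k = Sp η (k + 1)) : Sp η (k + 1) = Sp η (k + 2) := by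
  refine le_antisymm (sp_mono η (by omega)) ?_
  rw [Sp, Submodule.span_le]
  rintro M ⟨w, hw, rfl⟩
  match w with
  | [] => exact Submodule.subset_span ⟨[], by simp, rfl⟩
  | a :: w =>
    have hw' : w.length ≤ k + 1 := by simpa using hw
    have hmem : η w ∈ Sp η k := hk ▸ Submodule.subset_span ⟨w, hw', rfl⟩
    have hmap : conjMap (A a) (η w) ∈ (Sp η k).map (conjMap (A a)) :=
      Submodule.mem_map_of_mem hmem
    have hle : (Sp η k).map (conjMap (A a)) ≤ Sp η (k + 1) := by
      rw [Sp, Submodule.map_span]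
      refine Submodule.span_le.2 ?_
      rintro _ ⟨_, ⟨u, hu, rfl⟩, rfl⟩
      exact Submodule.subset_span ⟨a :: u, by simpa using hu, (hrec a u)⟩
    have h2 := hle hmap
    have : conjMap (A a) (η w) = η (a :: w) := (hrec a w).symm
    rwa [this] at h2

private lemma sp_stab {σ : Type*} {n : Type*} [Fintype n]
    (A : σ → Matrix n n ℂ) (η : List σ → Matrix n n ℂ)
    (hrec : ∀ (a : σ) (w : List σ), η (a :: w) = (A a)ᴴ * η w * A a)
    (l : ℕ) (hl : Sp η l = Sp η (l + 1)) : ∀ j, Sp η l = Sp η (l + j) := by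
  have hstep : ∀ j, Sp η (l + j) = Sp η (l + j + 1) := by
    intro j
    induction j with
    | zero => exact hl
    | succ j ih => exact sp_step A η hrec (l + j) ih
  intro j
  induction j with
  | zero => rfl
  | succ j ih => exact ih.trans (hstep j)

theorem stmt7 {σ : Type*} [Fintype σ] (n₁ n₂ : ℕ) (h₁ : 0 < n₁) (h₂ : 0 < n₂)
    (A : σ → Matrix (Fin n₁ ⊕ Fin n₂) (Fin n₁ ⊕ Fin n₂) ℂ)
    (hA : ∀ a : σ, ∃ (M₁ : Matrix (Fin n₁) (Fin n₁) ℂ) (M₂ : Matrix (Fin n₂) (Fin n₂) ℂ),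
      A a = Matrix.fromBlocks M₁ 0 0 M₂)
    (η : List σ → Matrix (Fin n₁ ⊕ Fin n₂) (Fin n₁ ⊕ Fin n₂) ℂ)
    (hε : ∃ (M₁ : Matrix (Fin n₁) (Fin n₁) ℂ) (M₂ : Matrix (Fin n₂) (Fin n₂) ℂ),
      η [] = Matrix.fromBlocks M₁ 0 0 M₂)
    (hrec : ∀ (a : σ) (w : List σ), η (a :: w) = (A a)ᴴ * η w * A a) :
    ∃ l < n₁ ^ 2 + n₂ ^ 2, ∀ j ≥ 1,
      Submodule.span ℂ {M | ∃ w : List σ, w.length ≤ l ∧ η w = M} =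
        Submodule.span ℂ {M | ∃ w : List σ, w.length ≤ l + j ∧ η w = M} := by
  classical
  set N := n₁ ^ 2 + n₂ ^ 2 with hNdef
  -- the block-diagonal embedding
  let φ : (Matrix (Fin n₁) (Fin n₁) ℂ × Matrix (Fin n₂) (Fin n₂) ℂ) →ₗ[ℂ]
      Matrix (Fin n₁ ⊕ Fin n₂) (Fin n₁ ⊕ Fin n₂) ℂ :=
    { toFun := fun p => Matrix.fromBlocks p.1 0 0 p.2
      map_add' := fun p q => by simp [Matrix.fromBlocks_add]
      map_smul' := fun c p => by simp [Matrix.fromBlocks_smul] }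
  -- every η w is block diagonal
  have hblock : ∀ w : List σ, ∃ X Y, η w = Matrix.fromBlocks X 0 0 Y := by
    intro w
    induction w with
    | nil => exact hε
    | cons a w ih =>
      obtain ⟨X, Y, hXY⟩ := ih
      obtain ⟨P, Q, hPQ⟩ := hA a
      refine ⟨Pᴴ * X * P, Qᴴ * Y * Q, ?_⟩
      simp [hrec, hXY, hPQ, Matrix.fromBlocks_conjTranspose, Matrix.fromBlocks_multiply]
  have hrange : ∀ w : List σ, η w ∈ LinearMap.range φ := by
    intro w
    obtain ⟨X, Y, h⟩ := hblock w
    exact ⟨(X, Y), h.symm⟩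
  -- there is a stabilization point below N
  have key : ∃ l < N, Sp η l = Sp η (l + 1) := by
    by_contra h
    push_neg at h
    have hlt : ∀ l < N, Sp η l < Sp η (l + 1) :=
      fun l hl => lt_of_le_of_ne (sp_mono η (Nat.le_succ l)) (h l hl)
    have hNpos : 0 < N := by positivity
    -- η [] ≠ 0
    have h0 : η [] ≠ 0 := by
      intro h0
      have hz : ∀ w : List σ, η w = 0 := by
        intro w
        induction w with
        | nil => exact h0
        | cons a w ih => simp [hrec, ih]
      apply h 0 hNpos
      have hsets : ∀ k : ℕ, {M | ∃ w : List σ, w.length ≤ k ∧ η w = M} = {(0 : Matrix (Fin n₁ ⊕ Fin n₂) (Fin n₁ ⊕ Fin n₂) ℂ)} := by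
        intro k
        ext M
        constructor
        · rintro ⟨w, hw, rfl⟩; simp [hz]
        · rintro rfl; exact ⟨[], by simp, hz []⟩
      rw [Sp, Sp, hsets, hsets]
    -- finrank of S 0 is positive
    have hmem0 : η [] ∈ Sp η 0 := Submodule.subset_span ⟨[], by simp, rfl⟩
    have hnt : Nontrivial (Sp η 0) :=
      nontrivial_of_ne ⟨η [], hmem0⟩ 0 (fun hc => h0 (congrArg Subtype.val hc))
    have hr0 : 0 < Module.finrank ℂ (Sp η 0) := Module.finrank_pos_iff.2 hnt
    -- strictly increasing finranks
    have hchain : ∀ l, l ≤ N → l < Module.finrank ℂ (Sp η l) := by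
      intro l
      induction l with
      | zero => intro _; exact hr0
      | succ l ih =>
        intro hlN
        have h1 := ih (by omega)
        have h2 : Module.finrank ℂ (Sp η l) < Module.finrank ℂ (Sp η (l + 1)) :=
          Submodule.finrank_lt_finrank_of_lt (hlt l (by omega))
        omega
    -- but finrank is bounded by N
    have hSV : Sp η N ≤ LinearMap.range φ := by
      rw [Sp, Submodule.span_le]
      rintro M ⟨w, _, rfl⟩
      exact hrange w
    have hub : Module.finrank ℂ (Sp η N) ≤ N := by
      have h1 : Module.finrank ℂ (Sp η N) ≤ Module.finrank ℂ (LinearMap.range φ) :=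
        Submodule.finrank_mono hSV
      have h2 : Module.finrank ℂ (LinearMap.range φ) ≤
          Module.finrank ℂ (Matrix (Fin n₁) (Fin n₁) ℂ × Matrix (Fin n₂) (Fin n₂) ℂ) :=
        LinearMap.finrank_range_le φ
      have h3 : Module.finrank ℂ (Matrix (Fin n₁) (Fin n₁) ℂ × Matrix (Fin n₂) (Fin n₂) ℂ) = N := by
        rw [Module.finrank_prod, Module.finrank_matrix, Module.finrank_matrix]
        simp [hNdef, sq]
      omega
    have := hchain N le_rfl
    omega
  obtain ⟨l, hlN, hl⟩ := key
  refine ⟨l, hlN, fun j _ => ?_⟩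
  exact sp_stab A η hrec l hl j
end

section
/- Let Σ be a finite alphabet, n₁, n₂ positive integers, A : Σ → Matrix (n₁+n₂) (n₁+n₂) ℂ with each A σ block-diagonal with blocks of sizes n₁, n₂, and η : Σ* → Matrix (n₁+n₂) (n₁+n₂) ℂ satisfying η(σ·w) = (A σ)ᴴ η(w) (A σ) with η(ε) block-diagonal. Let φ, ψ ∈ ℂ^{n₁+n₂}. If ⟨φ, η(w) φ⟩ = ⟨ψ, η(w) ψ⟩ for all words w with |w| ≤ n₁² + n₂² - 1, then ⟨φ, η(w) φ⟩ = ⟨ψ, η(w) ψ⟩ for all w ∈ Σ*. -/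
open Matrix

/-- Abstract stabilization lemma: the span of the orbit of `d []` under
finitely many linear maps is reached by words of length ≤ finrank - 1. -/
lemma aux_span_stab {K : Type*} [Field K] {V : Type*} [AddCommGroup V] [Module K V]
    [FiniteDimensional K V] {σ : Type*} (T : σ → V →ₗ[K] V) (d : List σ → V)
    (hd : ∀ (a : σ) (w : List σ), d (a :: w) = T a (d w)) (w : List σ) :
    d w ∈ Submodule.span K (d '' {u : List σ | u.length ≤ Module.finrank K V - 1}) := by
  classical
  set N := Module.finrank K V with hN
  set S : ℕ → Submodule K V := fun k => Submodule.span K (d '' {u : List σ | u.length ≤ k})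
    with hS
  have mono : Monotone S := by
    intro i j hij
    exact Submodule.span_mono (Set.image_mono fun u hu => le_trans hu hij)
  have hmem : ∀ u : List σ, d u ∈ S u.length := fun u =>
    Submodule.subset_span ⟨u, by simp, rfl⟩
  have step : ∀ k, S (k + 1) = S k ⊔ ⨆ a : σ, (S k).map (T a) := by
    intro k
    have hset : {u : List σ | u.length ≤ k + 1} =
        {u : List σ | u.length ≤ k} ∪ ⋃ a : σ, (List.cons a) '' {u : List σ | u.length ≤ k} := by
      ext u
      cases u with
      | nil => simp
      | cons a t =>
        simp only [Set.mem_setOf_eq, List.length_cons, Set.mem_union, Set.mem_iUnion,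
          Set.mem_image]
        constructor
        · intro hu
          right
          exact ⟨a, t, Nat.lt_succ_iff.mp (Nat.lt_of_lt_of_le (Nat.lt_succ_self _) hu), rfl⟩
        · rintro (hu | ⟨b, v, hv, hvu⟩)
          · exact le_trans hu (Nat.le_succ _)
          · cases hvu; simpa using Nat.succ_le_succ hv
    have himg : ∀ a : σ, d '' ((List.cons a) '' {u : List σ | u.length ≤ k}) =
        (T a) '' (d '' {u : List σ | u.length ≤ k}) := by
      intro a
      rw [← Set.image_comp, ← Set.image_comp]
      exact Set.image_congr fun u _ => hd a u
    simp only [hS, hset, Set.image_union, Set.image_iUnion, Submodule.span_union,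
      Submodule.span_iUnion]
    congr 1
    refine iSup_congr fun a => ?_
    rw [himg a, Submodule.map_span]
  have stab : ∀ k, S k = S (k + 1) → ∀ m, S (k + m) = S k := by
    intro k hk m
    induction m with
    | zero => rfl
    | succ m ih =>
      have : S (k + m + 1) = S (k + m) ⊔ ⨆ a : σ, (S (k + m)).map (T a) := step _
      rw [show k + (m + 1) = k + m + 1 from rfl, this, ih, ← step k, ← hk]
  have hex : ∃ k ≤ N - 1, S k = S (k + 1) := by
    by_contra hcon
    push_neg at hcon
    by_cases h0 : d [] = 0
    · refine hcon 0 (Nat.zero_le _) ?_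
      have hS0 : S 0 = ⊥ := by
        have : {u : List σ | u.length ≤ 0} = {([] : List σ)} := by
          ext u; simp [List.length_eq_zero_iff]
        rw [hS]
        simp [this, h0]
      rw [step 0, hS0]
      simp
    · have hpos : 0 < Module.finrank K (S 0) := by
        have hne : S 0 ≠ ⊥ := by
          intro hb
          have := hmem []
          rw [show ([] : List σ).length = 0 from rfl, hb, Submodule.mem_bot] at this
          exact h0 this
        rw [Module.finrank_pos_iff]
        exact Submodule.nontrivial_iff_ne_bot.mpr hne
      have chain : ∀ k, k ≤ N → k + Module.finrank K (S 0) ≤ Module.finrank K (S k) := by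
        intro k
        induction k with
        | zero => intro _; simp
        | succ k ih =>
          intro hk
          have hlt : S k < S (k + 1) := by
            refine lt_of_le_of_ne (mono (Nat.le_succ _)) ?_
            exact hcon k (by omega)
          have := Submodule.finrank_lt_finrank_of_lt hlt
          have := ih (by omega)
          omega
      have h1 := chain N (le_refl _)
      have h2 : Module.finrank K (S N) ≤ N := hN ▸ Submodule.finrank_le _
      omega
  obtain ⟨k, hk, heq⟩ := hex
  have hle : ∀ m, S m ≤ S (N - 1) := by
    intro m
    rcases le_or_gt m (N - 1) with hm | hm
    · exact mono hm
    · have : S m = S k := by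
        have := stab k heq (m - k)
        rwa [show k + (m - k) = m by omega] at this
      rw [this]
      exact mono hk
  exact hle w.length (hmem w)

theorem stmt13 {σ : Type*} [Fintype σ] (n₁ n₂ : ℕ) (h₁ : 0 < n₁) (h₂ : 0 < n₂)
    (A : σ → Matrix (Fin n₁ ⊕ Fin n₂) (Fin n₁ ⊕ Fin n₂) ℂ)
    (hA : ∀ a : σ, ∃ (M₁ : Matrix (Fin n₁) (Fin n₁) ℂ) (M₂ : Matrix (Fin n₂) (Fin n₂) ℂ),
      A a = Matrix.fromBlocks M₁ 0 0 M₂)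
    (η : List σ → Matrix (Fin n₁ ⊕ Fin n₂) (Fin n₁ ⊕ Fin n₂) ℂ)
    (hε : ∃ (M₁ : Matrix (Fin n₁) (Fin n₁) ℂ) (M₂ : Matrix (Fin n₂) (Fin n₂) ℂ),
      η [] = Matrix.fromBlocks M₁ 0 0 M₂)
    (hrec : ∀ (a : σ) (w : List σ), η (a :: w) = (A a)ᴴ * η w * A a)
    (φ ψ : Fin n₁ ⊕ Fin n₂ → ℂ)
    (h : ∀ w : List σ, w.length ≤ n₁ ^ 2 + n₂ ^ 2 - 1 →
      star φ ⬝ᵥ (η w).mulVec φ = star ψ ⬝ᵥ (η w).mulVec ψ) :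
    ∀ w : List σ, star φ ⬝ᵥ (η w).mulVec φ = star ψ ⬝ᵥ (η w).mulVec ψ := by
  classical
  -- blocks of A
  set B₁ : σ → Matrix (Fin n₁) (Fin n₁) ℂ := fun a => (A a).toBlocks₁₁ with hB₁
  set B₂ : σ → Matrix (Fin n₂) (Fin n₂) ℂ := fun a => (A a).toBlocks₂₂ with hB₂
  have hAb : ∀ a : σ, A a = fromBlocks (B₁ a) 0 0 (B₂ a) := by
    intro a
    obtain ⟨M₁, M₂, hM⟩ := hA a
    rw [hB₁, hB₂]
    simp only [hM, toBlocks_fromBlocks₁₁, toBlocks_fromBlocks₂₂]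
  -- η is block diagonal
  have hηb : ∀ w : List σ, η w = fromBlocks (η w).toBlocks₁₁ 0 0 (η w).toBlocks₂₂ := by
    intro w
    induction w with
    | nil =>
      obtain ⟨M₁, M₂, hM⟩ := hε
      rw [hM]
      simp only [toBlocks_fromBlocks₁₁, toBlocks_fromBlocks₂₂]
    | cons a t ih =>
      have key : η (a :: t) = fromBlocks ((B₁ a)ᴴ * (η t).toBlocks₁₁ * B₁ a) 0 0
          ((B₂ a)ᴴ * (η t).toBlocks₂₂ * B₂ a) := by
        rw [hrec a t, hAb a]
        conv_lhs => rw [ih]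
        simp [fromBlocks_conjTranspose, fromBlocks_multiply]
      rw [key]
      simp only [toBlocks_fromBlocks₁₁, toBlocks_fromBlocks₂₂]
  have hkey : ∀ (a : σ) (t : List σ), η (a :: t) = fromBlocks
      ((B₁ a)ᴴ * (η t).toBlocks₁₁ * B₁ a) 0 0 ((B₂ a)ᴴ * (η t).toBlocks₂₂ * B₂ a) := by
    intro a t
    rw [hrec a t, hAb a]
    conv_lhs => rw [hηb t]
    simp [fromBlocks_conjTranspose, fromBlocks_multiply]
  -- dynamics on the product space
  set d : List σ → Matrix (Fin n₁) (Fin n₁) ℂ × Matrix (Fin n₂) (Fin n₂) ℂ := fun w => ((η w).toBlocks₁₁, (η w).toBlocks₂₂) with hdd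
  set T : σ → (Matrix (Fin n₁) (Fin n₁) ℂ × Matrix (Fin n₂) (Fin n₂) ℂ) →ₗ[ℂ]
      (Matrix (Fin n₁) (Fin n₁) ℂ × Matrix (Fin n₂) (Fin n₂) ℂ) := fun a => LinearMap.prodMap
    ((LinearMap.mulRight ℂ (B₁ a)).comp (LinearMap.mulLeft ℂ (B₁ a)ᴴ))
    ((LinearMap.mulRight ℂ (B₂ a)).comp (LinearMap.mulLeft ℂ (B₂ a)ᴴ)) with hT
  have hd : ∀ (a : σ) (w : List σ), d (a :: w) = T a (d w) := by
    intro a w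
    rw [hdd, hT]
    simp only [hkey a w, toBlocks_fromBlocks₁₁, toBlocks_fromBlocks₂₂]
    rfl
  -- the linear functional
  have fb_add : ∀ (M M' : Matrix (Fin n₁) (Fin n₁) ℂ) (P P' : Matrix (Fin n₂) (Fin n₂) ℂ),
      fromBlocks (M + M') 0 0 (P + P') = fromBlocks M 0 0 P + fromBlocks M' 0 0 P' := by
    intro M M' P P'
    rw [Matrix.fromBlocks_add]
    simp
  have fb_smul : ∀ (c : ℂ) (M : Matrix (Fin n₁) (Fin n₁) ℂ) (P : Matrix (Fin n₂) (Fin n₂) ℂ),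
      fromBlocks (c • M) 0 0 (c • P) = c • fromBlocks M 0 0 P := by
    intro c M P
    rw [Matrix.fromBlocks_smul]
    simp
  set f : (Matrix (Fin n₁) (Fin n₁) ℂ × Matrix (Fin n₂) (Fin n₂) ℂ) →ₗ[ℂ] ℂ :=
    { toFun := fun p => star φ ⬝ᵥ (fromBlocks p.1 0 0 p.2).mulVec φ -
        star ψ ⬝ᵥ (fromBlocks p.1 0 0 p.2).mulVec ψ
      map_add' := by
        intro p q
        simp only [Prod.fst_add, Prod.snd_add, fb_add, add_mulVec, dotProduct_add]
        ring
      map_smul' := by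
        intro c p
        simp only [Prod.smul_fst, Prod.smul_snd, fb_smul, smul_mulVec, dotProduct_smul,
          RingHom.id_apply, smul_eq_mul]
        ring } with hf
  have hfr : Module.finrank ℂ (Matrix (Fin n₁) (Fin n₁) ℂ × Matrix (Fin n₂) (Fin n₂) ℂ)
      = n₁ ^ 2 + n₂ ^ 2 := by
    rw [Module.finrank_prod, Module.finrank_matrix, Module.finrank_matrix]
    simp [Fintype.card_fin, sq]
  have hfd : ∀ w : List σ, f (d w) = star φ ⬝ᵥ (η w).mulVec φ - star ψ ⬝ᵥ (η w).mulVec ψ := by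
    intro w
    rw [hf]
    simp only [LinearMap.coe_mk, AddHom.coe_mk, hdd]
    rw [← hηb w]
  intro w
  have hmem := aux_span_stab T d hd w
  rw [hfr] at hmem
  have hker : Submodule.span ℂ (d '' {u : List σ | u.length ≤ n₁ ^ 2 + n₂ ^ 2 - 1}) ≤
      LinearMap.ker f := by
    rw [Submodule.span_le]
    rintro x ⟨u, hu, rfl⟩
    rw [SetLike.mem_coe, LinearMap.mem_ker, hfd u, sub_eq_zero]
    exact h u hu
  have := hker hmem
  rw [LinearMap.mem_ker, hfd w, sub_eq_zero] at this
  exact this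
end

section
/- Let Σ be a finite alphabet, n₁, n₂ positive integers, and for each σ ∈ Σ ∪ {#} let Φ_σ : Matrix (n₁+n₂) (n₁+n₂) ℂ →ₗ[ℂ] Matrix (n₁+n₂) (n₁+n₂) ℂ be linear maps preserving the subspace of block-diagonal matrices (blocks of sizes n₁, n₂). Let ϑ : Σ* → Matrix (n₁+n₂) (n₁+n₂) ℂ satisfy ϑ(σ·w) = Φ_σ(ϑ(w)) with ϑ(ε) block-diagonal, and set θ(w) = Φ_#(ϑ(w)). Let q₁ = (u, 0) and q₂ = (0, v) with u ∈ ℂ^{n₁}, v ∈ ℂ^{n₂}. If ⟨q₁, θ(w) q₁⟩ = ⟨q₂, θ(w) q₂⟩ for all words w with |w| ≤ n₁² + n₂² - 1, then ⟨q₁, θ(w) q₁⟩ = ⟨q₂, θ(w) q₂⟩ for all w ∈ Σ*. -/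
open Matrix

theorem stmt19 {σ : Type*} [Fintype σ] (n₁ n₂ : ℕ) (h₁ : 0 < n₁) (h₂ : 0 < n₂)
    (Φ : σ → (Matrix (Fin n₁ ⊕ Fin n₂) (Fin n₁ ⊕ Fin n₂) ℂ →ₗ[ℂ]
      Matrix (Fin n₁ ⊕ Fin n₂) (Fin n₁ ⊕ Fin n₂) ℂ))
    (Φsharp : Matrix (Fin n₁ ⊕ Fin n₂) (Fin n₁ ⊕ Fin n₂) ℂ →ₗ[ℂ]
      Matrix (Fin n₁ ⊕ Fin n₂) (Fin n₁ ⊕ Fin n₂) ℂ)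
    (hΦ : ∀ (a : σ) (X : Matrix (Fin n₁ ⊕ Fin n₂) (Fin n₁ ⊕ Fin n₂) ℂ),
      (∃ (X₁ : Matrix (Fin n₁) (Fin n₁) ℂ) (X₂ : Matrix (Fin n₂) (Fin n₂) ℂ),
        X = Matrix.fromBlocks X₁ 0 0 X₂) →
      ∃ (Y₁ : Matrix (Fin n₁) (Fin n₁) ℂ) (Y₂ : Matrix (Fin n₂) (Fin n₂) ℂ),
        Φ a X = Matrix.fromBlocks Y₁ 0 0 Y₂)
    (hΦsharp : ∀ X : Matrix (Fin n₁ ⊕ Fin n₂) (Fin n₁ ⊕ Fin n₂) ℂ,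
      (∃ (X₁ : Matrix (Fin n₁) (Fin n₁) ℂ) (X₂ : Matrix (Fin n₂) (Fin n₂) ℂ),
        X = Matrix.fromBlocks X₁ 0 0 X₂) →
      ∃ (Y₁ : Matrix (Fin n₁) (Fin n₁) ℂ) (Y₂ : Matrix (Fin n₂) (Fin n₂) ℂ),
        Φsharp X = Matrix.fromBlocks Y₁ 0 0 Y₂)
    (ϑ : List σ → Matrix (Fin n₁ ⊕ Fin n₂) (Fin n₁ ⊕ Fin n₂) ℂ)
    (hrec : ∀ (a : σ) (w : List σ), ϑ (a :: w) = Φ a (ϑ w))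
    (hε : ∃ (M₁ : Matrix (Fin n₁) (Fin n₁) ℂ) (M₂ : Matrix (Fin n₂) (Fin n₂) ℂ),
      ϑ [] = Matrix.fromBlocks M₁ 0 0 M₂)
    (u : Fin n₁ → ℂ) (v : Fin n₂ → ℂ)
    (h : ∀ w : List σ, w.length ≤ n₁ ^ 2 + n₂ ^ 2 - 1 →
      star (Sum.elim u (0 : Fin n₂ → ℂ)) ⬝ᵥ (Φsharp (ϑ w)).mulVec (Sum.elim u 0) =
        star (Sum.elim (0 : Fin n₁ → ℂ) v) ⬝ᵥ (Φsharp (ϑ w)).mulVec (Sum.elim 0 v)) :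
    ∀ w : List σ,
      star (Sum.elim u (0 : Fin n₂ → ℂ)) ⬝ᵥ (Φsharp (ϑ w)).mulVec (Sum.elim u 0) =
        star (Sum.elim (0 : Fin n₁ → ℂ) v) ⬝ᵥ (Φsharp (ϑ w)).mulVec (Sum.elim 0 v) := by
  classical
  set q₁ : Fin n₁ ⊕ Fin n₂ → ℂ := Sum.elim u 0 with hq₁
  set q₂ : Fin n₁ ⊕ Fin n₂ → ℂ := Sum.elim 0 v with hq₂
  -- the linear functional measuring the difference
  set f : Matrix (Fin n₁ ⊕ Fin n₂) (Fin n₁ ⊕ Fin n₂) ℂ →ₗ[ℂ] ℂ :=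
    { toFun := fun X => star q₁ ⬝ᵥ (Φsharp X).mulVec q₁ - star q₂ ⬝ᵥ (Φsharp X).mulVec q₂
      map_add' := by
        intro X Y
        simp [Matrix.add_mulVec, dotProduct_add]
        ring
      map_smul' := by
        intro c X
        simp [Matrix.smul_mulVec, dotProduct_smul]
        ring } with hfdef
  suffices key : ∀ w : List σ, f (ϑ w) = 0 by
    intro w
    have := key w
    have h0 : star q₁ ⬝ᵥ (Φsharp (ϑ w)).mulVec q₁ - star q₂ ⬝ᵥ (Φsharp (ϑ w)).mulVec q₂ = 0 := this
    exact sub_eq_zero.mp h0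
  set d : ℕ := n₁ ^ 2 + n₂ ^ 2 with hd
  have hd1 : 1 ≤ d := by
    have : 1 ≤ n₁ ^ 2 := Nat.one_le_pow _ _ h₁
    omega
  -- trivial case : ϑ [] = 0
  by_cases hz : ϑ [] = 0
  · have hall : ∀ w : List σ, ϑ w = 0 := by
      intro w
      induction w with
      | nil => exact hz
      | cons a w ih => rw [hrec, ih, map_zero]
    intro w
    rw [hall w]
    simp
  -- the block-diagonal subspace
  set g : (Matrix (Fin n₁) (Fin n₁) ℂ × Matrix (Fin n₂) (Fin n₂) ℂ) →ₗ[ℂ]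
      Matrix (Fin n₁ ⊕ Fin n₂) (Fin n₁ ⊕ Fin n₂) ℂ :=
    { toFun := fun P => Matrix.fromBlocks P.1 0 0 P.2
      map_add' := by intro P Q; simp [Matrix.fromBlocks_add]
      map_smul' := by intro c P; simp [Matrix.fromBlocks_smul] } with hgdef
  set D : Submodule ℂ (Matrix (Fin n₁ ⊕ Fin n₂) (Fin n₁ ⊕ Fin n₂) ℂ) :=
    LinearMap.range g with hDdef
  have hD_iff : ∀ X, X ∈ D ↔ ∃ (X₁ : Matrix (Fin n₁) (Fin n₁) ℂ)
      (X₂ : Matrix (Fin n₂) (Fin n₂) ℂ), X = Matrix.fromBlocks X₁ 0 0 X₂ := by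
    intro X
    constructor
    · rintro ⟨⟨X₁, X₂⟩, rfl⟩
      exact ⟨X₁, X₂, rfl⟩
    · rintro ⟨X₁, X₂, rfl⟩
      exact ⟨(X₁, X₂), rfl⟩
  have hg_inj : Function.Injective g := by
    intro P Q hPQ
    have h11 := congrArg Matrix.toBlocks₁₁ hPQ
    have h22 := congrArg Matrix.toBlocks₂₂ hPQ
    simp only [hgdef, LinearMap.coe_mk, AddHom.coe_mk, Matrix.toBlocks_fromBlocks₁₁,
      Matrix.toBlocks_fromBlocks₂₂] at h11 h22
    exact Prod.ext h11 h22
  have hD_rank : Module.finrank ℂ D = d := by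
    rw [hDdef, LinearMap.finrank_range_of_inj hg_inj, Module.finrank_prod,
      Module.finrank_matrix, Module.finrank_matrix]
    simp only [Fintype.card_fin, Module.finrank_self, mul_one, hd]
    ring
  -- all ϑ w are block diagonal
  have hmemD : ∀ w : List σ, ϑ w ∈ D := by
    intro w
    induction w with
    | nil => exact (hD_iff _).mpr hε
    | cons a w ih =>
      rw [hrec]
      exact (hD_iff _).mpr (hΦ a (ϑ w) ((hD_iff _).mp ih))
  -- the increasing chain of subspaces
  set V : ℕ → Submodule ℂ (Matrix (Fin n₁ ⊕ Fin n₂) (Fin n₁ ⊕ Fin n₂) ℂ) :=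
    fun k => Submodule.span ℂ {X | ∃ w : List σ, w.length ≤ k ∧ ϑ w = X} with hVdef
  have hmono : ∀ k l : ℕ, k ≤ l → V k ≤ V l := by
    intro k l hkl
    apply Submodule.span_mono
    rintro X ⟨w, hw, rfl⟩
    exact ⟨w, hw.trans hkl, rfl⟩
  have hVD : ∀ k, V k ≤ D := by
    intro k
    apply Submodule.span_le.mpr
    rintro X ⟨w, _, rfl⟩
    exact hmemD w
  have hmem : ∀ (k : ℕ) (w : List σ), w.length ≤ k → ϑ w ∈ V k := by
    intro k w hw
    exact Submodule.subset_span ⟨w, hw, rfl⟩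
  have hmap : ∀ (a : σ) (k : ℕ) (X), X ∈ V k → Φ a X ∈ V (k + 1) := by
    intro a k X hX
    have h1 : Φ a X ∈ Submodule.map (Φ a) (V k) := Submodule.mem_map_of_mem hX
    rw [hVdef, Submodule.map_span] at h1
    refine Submodule.span_le.mpr ?_ h1
    rintro Y ⟨Z, ⟨w, hw, rfl⟩, rfl⟩
    refine Submodule.subset_span ⟨a :: w, by simpa using hw, ?_⟩
    rw [hrec]
  have hstep : ∀ k : ℕ, V (k + 1) ≤ V k → V (k + 2) ≤ V (k + 1) := by
    intro k hk
    apply Submodule.span_le.mpr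
    rintro X ⟨w, hw, rfl⟩
    cases w with
    | nil => exact hmem (k + 1) [] (by simp)
    | cons a w' =>
      have hw' : ϑ w' ∈ V k := hk (hmem (k + 1) w' (by simpa using hw))
      rw [hrec]
      exact hmap a k _ hw'
  have hstab : ∀ k : ℕ, V (k + 1) ≤ V k → ∀ m : ℕ, V m ≤ V k := by
    intro k hk
    have haux : ∀ m : ℕ, V (k + m + 1) ≤ V (k + m) := by
      intro m
      induction m with
      | zero => exact hk
      | succ m ih =>
        have := hstep (k + m) ih
        convert this using 2 <;> omega
    have haux2 : ∀ m : ℕ, V (k + m) ≤ V k := by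
      intro m
      induction m with
      | zero => exact le_rfl
      | succ m ih => exact le_trans (haux m) ih
    intro m
    rcases le_or_gt m k with hmk | hmk
    · exact hmono m k hmk
    · have : m = k + (m - k) := by omega
      rw [this]
      exact haux2 (m - k)
  -- find a stabilization point at level ≤ d - 1
  have hex : ∃ k, k ≤ d - 1 ∧ V (k + 1) ≤ V k := by
    by_contra hcon
    push_neg at hcon
    have hrank : ∀ k : ℕ, k ≤ d → k + 1 ≤ Module.finrank ℂ (V k) := by
      intro k
      induction k with
      | zero =>
        intro _
        by_contra h0
        push_neg at h0
        have h00 : Module.finrank ℂ (V 0) = 0 := by omega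
        have hbot : V 0 = ⊥ := Submodule.finrank_eq_zero.mp h00
        have : ϑ [] ∈ V 0 := hmem 0 [] le_rfl
        rw [hbot, Submodule.mem_bot] at this
        exact hz this
      | succ k ih =>
        intro hkd
        have hklt : V k < V (k + 1) := by
          refine lt_of_le_of_ne (hmono k (k + 1) (by omega)) ?_
          intro heq
          exact hcon k (by omega) (le_of_eq heq.symm)
        have h1 := Submodule.finrank_lt_finrank_of_lt hklt
        have h2 := ih (by omega)
        omega
    have h1 := hrank d le_rfl
    have h2 : Module.finrank ℂ (V d) ≤ Module.finrank ℂ D :=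
      Submodule.finrank_mono (hVD d)
    omega
  obtain ⟨k, hkd, hk⟩ := hex
  -- f vanishes on V k
  have hker : V k ≤ LinearMap.ker f := by
    apply Submodule.span_le.mpr
    rintro X ⟨w, hw, rfl⟩
    have := h w (hw.trans hkd)
    simp only [LinearMap.mem_ker, SetLike.mem_coe]
    show star q₁ ⬝ᵥ (Φsharp (ϑ w)).mulVec q₁ - star q₂ ⬝ᵥ (Φsharp (ϑ w)).mulVec q₂ = 0
    rw [sub_eq_zero]
    exact this
  intro w
  have hw : ϑ w ∈ V k := hstab k hk w.length (hmem w.length w le_rfl)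
  exact LinearMap.mem_ker.mp (hker hw)
end
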